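/- Let G ∈ B^+(H). For every X ∈ B^+(H), τ_G(X) = X − [G]X, where [G]X denotes the strong (pointwise) limit of the non-decreasing sequence (nG):X as n → ∞ (which exists since (nG):X ≤ X for all n). Moreover, the series Σ_{n=0}^∞ (μ_G^{[n]}(X)):G converges strongly and its sum equals [G]X. -/

import Mathlib

open Filter Topology

variable {H : Type*} [NormedAddCommGroup H] [InnerProductSpace ℂ H] [CompleteSpace H]

/-- `P` is the parallel sum `X : G` of `X` and `G`. -/
def IsParallelSum (X G P : H →L[ℂ] H) : Prop :=
  P.IsPositive ∧ ∀ h : H,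
    IsGLB {r : ℝ | ∃ f g : H, f + g = h ∧
        r = (inner ℂ (X f) f : ℂ).re + (inner ℂ (G g) g : ℂ).re}
      ((inner ℂ (P h) h : ℂ).re)

/-- `S` is the (unique) nonnegative square root of `X`. -/
def IsSqrtOf (S X : H →L[ℂ] H) : Prop := S.IsPositive ∧ S * S = X

/-- The orbit of `F 0` under the map `μ_G : X ↦ X - X:G`. -/
def IsMuOrbit (G : H →L[ℂ] H) (F : ℕ → H →L[ℂ] H) : Prop :=
  ∀ n : ℕ, ∃ P : H →L[ℂ] H, IsParallelSum (F n) G P ∧ F (n + 1) = F n - P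

/-- `L = τ_G(X)` : the strong limit of the iterates `μ_G^[n](X)`. -/
def IsTau (G X L : H →L[ℂ] H) : Prop :=
  ∃ F : ℕ → H →L[ℂ] H, F 0 = X ∧ IsMuOrbit G F ∧
    ∀ x : H, Tendsto (fun n => F n x) atTop (𝓝 (L x))

/-- `P` is the orthogonal projection of `H` onto the subspace `M`. -/
def IsOrthProjOnto (M : Submodule ℂ H) (P : H →L[ℂ] H) : Prop :=
  ∀ x : H, P x ∈ M ∧ x - P x ∈ Mᗮ

/-- `A = [G]X` : Ando's `G`-absolutely continuous part of `X`, the strong limit of the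
(non-decreasing) sequence `(nG) : X`. -/
def IsAndoPart (G X A : H →L[ℂ] H) : Prop :=
  ∃ Q : ℕ → H →L[ℂ] H, (∀ n : ℕ, IsParallelSum ((n : ℂ) • G) X (Q n)) ∧
    ∀ x : H, Tendsto (fun n => Q n x) atTop (𝓝 (A x))

/-!
Write `S n = X - μ_G^[n] X = ∑_{k<n} (μ_G^[k] X) : G` and `Q m = (mG) : X`. Since `0 ≤ S n ≤ X`
and `S n ≤ nG`, comparing `S n` with `Q m` through the inequality
`T (f + g) ≤ (1 + t) T f + (1 + 1/t) T g` for positive forms gives `S n ≤ [G]X`. Conversely,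
testing `Q m` on a near-optimal decomposition for `(μ_G^[k] X) : G` bounds `Q m` by
`(1 + t) S k + O(k) · ((μ_G^[k] X) : G)`, and the terms of the convergent series
`∑ ((μ_G^[k] X) : G)(x, x)` are `o(1/k)` along a subsequence, so `Q m ≤ sup_k S k`. Hence the
quadratic forms of `S n` increase to that of `[G]X`, and the estimate
`‖T x‖² ≤ ‖B‖ ⟨T x, x⟩` for `0 ≤ T ≤ B` upgrades this to strong convergence and makes the series
converge unconditionally.
-/

open ContinuousLinearMap

namespace ContinuousLinearMap

variable {𝕜 E : Type*} [RCLike 𝕜] [NormedAddCommGroup E] [InnerProductSpace 𝕜 E]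

lemma reApplyInnerSelf_sub (S T : E →L[𝕜] E) (x : E) :
    (S - T).reApplyInnerSelf x = S.reApplyInnerSelf x - T.reApplyInnerSelf x := by
  simp [reApplyInnerSelf_apply, inner_sub_left]

lemma reApplyInnerSelf_neg (T : E →L[𝕜] E) (x : E) :
    T.reApplyInnerSelf (-x) = T.reApplyInnerSelf x := by
  simp [reApplyInnerSelf_apply]

lemma reApplyInnerSelf_sum {ι : Type*} (s : Finset ι) (T : ι → E →L[𝕜] E) (x : E) :
    (∑ i ∈ s, T i).reApplyInnerSelf x = ∑ i ∈ s, (T i).reApplyInnerSelf x := by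
  simp [reApplyInnerSelf_apply, sum_inner]

lemma reApplyInnerSelf_natCast_smul (n : ℕ) (T : E →L[𝕜] E) (x : E) :
    ((n : 𝕜) • T).reApplyInnerSelf x = n * T.reApplyInnerSelf x := by
  simp [reApplyInnerSelf_apply, inner_smul_left]

lemma reApplyInnerSelf_le_of_le {S T : E →L[𝕜] E} (h : S ≤ T) (x : E) :
    S.reApplyInnerSelf x ≤ T.reApplyInnerSelf x :=
  sub_nonneg.mp (reApplyInnerSelf_sub T S x ▸ h.2 x)

lemma le_of_reApplyInnerSelf_le {S T : E →L[𝕜] E} (hS : S.IsSymmetric) (hT : T.IsSymmetric)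
    (h : ∀ x, S.reApplyInnerSelf x ≤ T.reApplyInnerSelf x) : S ≤ T :=
  ⟨hT.sub hS, fun x => reApplyInnerSelf_sub T S x ▸ sub_nonneg.mpr (h x)⟩

lemma IsPositive.reApplyInnerSelf_add_le {T : E →L[𝕜] E} (hT : T.IsPositive) {t : ℝ} (ht : 0 < t)
    (x y : E) :
    T.reApplyInnerSelf (x + y)
      ≤ (1 + t) * T.reApplyInnerSelf x + (1 + t⁻¹) * T.reApplyInnerSelf y := by
  have hyx : RCLike.re (inner 𝕜 (T y) x) = RCLike.re (inner 𝕜 (T x) y) := by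
    rw [hT.inner_left_eq_inner_right y x, ← inner_conj_symm, RCLike.conj_re]
  have key : t * T.reApplyInnerSelf (x + y) + T.reApplyInnerSelf ((t : 𝕜) • x - y)
      = (t + t ^ 2) * T.reApplyInnerSelf x + (1 + t) * T.reApplyInnerSelf y := by
    simp only [reApplyInnerSelf_apply, map_add, map_sub, map_smul, inner_add_left, inner_add_right,
      inner_sub_left, inner_sub_right, inner_smul_left, inner_smul_right, map_add, map_sub,
      RCLike.conj_ofReal, RCLike.re_ofReal_mul, hyx]
    ring
  have hrhs : t * ((1 + t) * T.reApplyInnerSelf x + (1 + t⁻¹) * T.reApplyInnerSelf y)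
      = (t + t ^ 2) * T.reApplyInnerSelf x + (1 + t) * T.reApplyInnerSelf y := by
    field_simp
    ring
  refine le_of_mul_le_mul_left ?_ ht
  linarith [hT.2 ((t : 𝕜) • x - y)]

lemma tendsto_reApplyInnerSelf {ι : Type*} {l : Filter ι} {T : ι → E →L[𝕜] E} {T₀ : E →L[𝕜] E}
    {x : E} (h : Tendsto (fun i => T i x) l (𝓝 (T₀ x))) :
    Tendsto (fun i => (T i).reApplyInnerSelf x) l (𝓝 (T₀.reApplyInnerSelf x)) :=
  (RCLike.continuous_re.tendsto _).comp (h.inner tendsto_const_nhds)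

lemma isPositive_of_tendsto {ι : Type*} {l : Filter ι} [l.NeBot] {T : ι → E →L[𝕜] E}
    {T₀ : E →L[𝕜] E} (hT : ∀ i, (T i).IsPositive) (h : ∀ x, Tendsto (fun i => T i x) l (𝓝 (T₀ x))) :
    T₀.IsPositive := by
  refine ⟨fun x y => tendsto_nhds_unique ((h x).inner tendsto_const_nhds) ?_,
    fun x => ge_of_tendsto' (tendsto_reApplyInnerSelf (h x)) fun i => (hT i).2 x⟩
  simpa only [coe_coe, (hT _).inner_left_eq_inner_right] using tendsto_const_nhds.inner (h y)

end ContinuousLinearMap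

lemma ContinuousLinearMap.norm_apply_sq_le_of_nonneg_of_le {T B : H →L[ℂ] H} (hT : 0 ≤ T)
    (hTB : T ≤ B) (x : H) : ‖T x‖ ^ 2 ≤ ‖B‖ * T.reApplyInnerSelf x := by
  have hTpos := (nonneg_iff_isPositive T).mp hT
  have hsq : T * T ≤ ‖T‖ • T := by
    obtain ⟨R, hR, rfl⟩ : ∃ R, 0 ≤ R ∧ R * R = T :=
      ⟨_, CFC.sqrt_nonneg T, CFC.sqrt_mul_sqrt_self T hT⟩
    simpa only [hR.isSelfAdjoint.star_eq, mul_assoc] using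
      CStarAlgebra.star_left_conjugate_le_norm_smul (a := R) (b := R * R) hT.isSelfAdjoint
  have hform : ‖T x‖ ^ 2 ≤ ‖T‖ * T.reApplyInnerSelf x := by
    have := reApplyInnerSelf_le_of_le hsq x
    rw [reApplyInnerSelf_apply, reApplyInnerSelf_apply, mul_apply_eq_comp, smul_apply,
      hTpos.inner_left_eq_inner_right (T x) x, inner_self_eq_norm_sq_to_K,
      RCLike.real_smul_eq_coe_smul (K := ℂ), inner_smul_real_left] at this
    simpa [← Complex.ofReal_pow, reApplyInnerSelf_apply] using this
  exact hform.trans (mul_le_mul_of_nonneg_right (CStarAlgebra.norm_le_norm_of_nonneg_of_le hT hTB)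
    (hTpos.2 x))

lemma Summable.frequently_natCast_mul_lt {a : ℕ → ℝ} (ha : Summable a) {ε : ℝ} (hε : 0 < ε) :
    ∃ᶠ n in atTop, n * a n < ε := by
  by_contra! h
  refine Real.not_summable_natCast_inv ((summable_mul_left_iff hε.ne').mp
    (ha.of_norm_bounded_eventually ?_))
  rw [Nat.cofinite_eq_atTop]
  filter_upwards [h, eventually_gt_atTop 0] with n hn hn0
  have hn0' : (0 : ℝ) < n := Nat.cast_pos.mpr hn0
  rw [Real.norm_of_nonneg (by positivity), ← div_eq_mul_inv, div_le_iff₀' hn0']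
  exact hn

section

variable {E : Type*} [NormedAddCommGroup E] [InnerProductSpace ℂ E]

namespace IsParallelSum

variable {X G P : E →L[ℂ] E}

lemma reApplyInnerSelf_le (h : IsParallelSum X G P) (f g : E) :
    P.reApplyInnerSelf (f + g) ≤ X.reApplyInnerSelf f + G.reApplyInnerSelf g :=
  (h.2 (f + g)).1 ⟨f, g, rfl, rfl⟩

lemma le_reApplyInnerSelf (h : IsParallelSum X G P) {x : E} {c : ℝ}
    (hc : ∀ f g, f + g = x → c ≤ X.reApplyInnerSelf f + G.reApplyInnerSelf g) :
    c ≤ P.reApplyInnerSelf x :=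
  (h.2 x).2 fun _ ⟨f, g, hfg, hr⟩ => hr ▸ hc f g hfg

lemma le_left (h : IsParallelSum X G P) (hX : X.IsSymmetric) : P ≤ X :=
  le_of_reApplyInnerSelf_le h.1.1 hX fun x => by
    simpa [reApplyInnerSelf_apply] using h.reApplyInnerSelf_le x 0

lemma reApplyInnerSelf_le_one_add_mul {Q T : E →L[ℂ] E} {m : ℕ}
    (hQ : IsParallelSum ((m : ℂ) • G) X Q) (hG : G.IsPositive) (hT : T.IsPositive)
    (hTX : ∀ x, T.reApplyInnerSelf x ≤ X.reApplyInnerSelf x) {c : ℝ}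
    (hTG : ∀ x, T.reApplyInnerSelf x ≤ c * G.reApplyInnerSelf x) {t : ℝ} (ht : 0 < t)
    (hct : c ≤ t * m) (x : E) :
    T.reApplyInnerSelf x ≤ (1 + t) * Q.reApplyInnerSelf x := by
  rw [← div_le_iff₀' (by positivity)]
  refine hQ.le_reApplyInnerSelf fun f g hfg => ?_
  rw [div_le_iff₀' (by positivity), reApplyInnerSelf_natCast_smul, ← hfg, add_comm f]
  have hcG : (1 + t⁻¹) * (c * G.reApplyInnerSelf f) ≤ (1 + t) * (m * G.reApplyInnerSelf f) := by
    rw [← mul_assoc, ← mul_assoc]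
    refine mul_le_mul_of_nonneg_right ?_ (hG.2 f)
    rw [show 1 + t⁻¹ = (1 + t) / t by field_simp; ring, div_mul_eq_mul_div, div_le_iff₀ ht]
    nlinarith
  calc T.reApplyInnerSelf (g + f)
      ≤ (1 + t) * T.reApplyInnerSelf g + (1 + t⁻¹) * T.reApplyInnerSelf f :=
        hT.reApplyInnerSelf_add_le ht g f
    _ ≤ (1 + t) * X.reApplyInnerSelf g + (1 + t) * (m * G.reApplyInnerSelf f) := by
        refine add_le_add (mul_le_mul_of_nonneg_left (hTX g) (by positivity)) ?_
        exact (mul_le_mul_of_nonneg_left (hTG f) (by positivity)).trans hcG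
    _ = _ := by ring

lemma reApplyInnerSelf_le_of_parallelSum_sub {Q F : E →L[ℂ] E} {n : ℕ} {m t : ℝ}
    (hQ : IsParallelSum ((n : ℂ) • G) X Q) (hP : IsParallelSum F G P) (hG : G.IsPositive)
    (hF : F.IsPositive) (hS : (X - F).IsPositive)
    (hSG : ∀ x, (X - F).reApplyInnerSelf x ≤ m * G.reApplyInnerSelf x) (hm : 0 ≤ m) (ht : 0 < t)
    (w : E) :
    Q.reApplyInnerSelf w
      ≤ (1 + t) * (X - F).reApplyInnerSelf w + (n + 1 + (1 + t⁻¹) * m) * P.reApplyInnerSelf w := by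
  set K : ℝ := n + 1 + (1 + t⁻¹) * m
  have hKn : n + (1 + t⁻¹) * m ≤ K := by simp only [K]; linarith
  have hK1 : 1 ≤ K := by
    have : 0 ≤ (1 + t⁻¹) * m := by positivity
    simp only [K]; linarith [(n.cast_nonneg : (0 : ℝ) ≤ n)]
  rw [← sub_le_iff_le_add', ← div_le_iff₀' (by positivity)]
  refine hP.le_reApplyInnerSelf fun u v huv => ?_
  rw [div_le_iff₀' (by positivity), sub_le_iff_le_add']
  have hQw : Q.reApplyInnerSelf w ≤ n * G.reApplyInnerSelf v + X.reApplyInnerSelf u := by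
    simpa [← huv, add_comm u, reApplyInnerSelf_natCast_smul] using hQ.reApplyInnerSelf_le v u
  have hXu := reApplyInnerSelf_sub X F u
  have hSu : (X - F).reApplyInnerSelf u
      ≤ (1 + t) * (X - F).reApplyInnerSelf w + (1 + t⁻¹) * (m * G.reApplyInnerSelf v) := by
    have h := hS.reApplyInnerSelf_add_le ht w (-v)
    rw [← huv, add_neg_cancel_right] at h
    rw [← huv]
    refine h.trans ?_
    rw [reApplyInnerSelf_neg]
    gcongr
    exact hSG v
  nlinarith [mul_le_mul_of_nonneg_right hK1 (hF.2 u), mul_le_mul_of_nonneg_right hKn (hG.2 v)]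

end IsParallelSum

lemma IsAndoPart.reApplyInnerSelf_le {G X A T : E →L[ℂ] E} (hA : IsAndoPart G X A)
    (hG : G.IsPositive) (hT : T.IsPositive) (hTX : ∀ x, T.reApplyInnerSelf x ≤ X.reApplyInnerSelf x)
    {n : ℕ} (hTG : ∀ x, T.reApplyInnerSelf x ≤ n * G.reApplyInnerSelf x) (x : E) :
    T.reApplyInnerSelf x ≤ A.reApplyInnerSelf x := by
  obtain ⟨Q, hQ, hQA⟩ := hA
  have hlim : Tendsto (fun m : ℕ => (1 + (n + 1) / (m : ℝ)) * (Q m).reApplyInnerSelf x) atTop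
      (𝓝 (A.reApplyInnerSelf x)) := by
    simpa using ((tendsto_const_div_atTop_nhds_zero_nat ((n : ℝ) + 1)).const_add 1).mul
      (tendsto_reApplyInnerSelf (hQA x))
  refine ge_of_tendsto hlim ?_
  filter_upwards [eventually_gt_atTop 0] with m hm
  have hm' : (0 : ℝ) < m := Nat.cast_pos.mpr hm
  refine (hQ m).reApplyInnerSelf_le_one_add_mul hG hT hTX hTG (by positivity) ?_ x
  rw [div_mul_cancel₀ _ hm'.ne']
  linarith

def IsMuOrbitWith (G : E →L[ℂ] E) (F P : ℕ → E →L[ℂ] E) : Prop :=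
  ∀ n, IsParallelSum (F n) G (P n) ∧ F (n + 1) = F n - P n

namespace IsMuOrbitWith

variable {G : E →L[ℂ] E} {F P : ℕ → E →L[ℂ] E}

lemma isPositive (h : IsMuOrbitWith G F P) (h0 : (F 0).IsPositive) (n : ℕ) : (F n).IsPositive := by
  induction n with
  | zero => exact h0
  | succ n ih => rw [(h n).2]; exact (h n).1.le_left ih.1

lemma sum_range (h : IsMuOrbitWith G F P) (n : ℕ) : ∑ k ∈ Finset.range n, P k = F 0 - F n := by
  rw [← Finset.sum_range_sub']
  exact Finset.sum_congr rfl fun k _ => by rw [(h k).2, sub_sub_cancel]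

lemma reApplyInnerSelf_sub_le (h : IsMuOrbitWith G F P) (n : ℕ) (x : E) :
    (F 0 - F n).reApplyInnerSelf x ≤ n * G.reApplyInnerSelf x := by
  calc (F 0 - F n).reApplyInnerSelf x = ∑ k ∈ Finset.range n, (P k).reApplyInnerSelf x := by
        rw [← h.sum_range, reApplyInnerSelf_sum]
    _ ≤ ∑ k ∈ Finset.range n, G.reApplyInnerSelf x := Finset.sum_le_sum fun k _ => by
        simpa [reApplyInnerSelf_apply] using (h k).1.reApplyInnerSelf_le 0 x
    _ = n * G.reApplyInnerSelf x := by simp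

end IsMuOrbitWith

end

namespace IsMuOrbitWith

variable {G : H →L[ℂ] H} {F P : ℕ → H →L[ℂ] H}

lemma sum_nonneg (h : IsMuOrbitWith G F P) (t : Finset ℕ) : 0 ≤ ∑ k ∈ t, P k :=
  Finset.sum_nonneg fun k _ => (nonneg_iff_isPositive _).mpr (h k).1.1

lemma sum_le (h : IsMuOrbitWith G F P) (h0 : (F 0).IsPositive) (t : Finset ℕ) :
    ∑ k ∈ t, P k ≤ F 0 := by
  obtain ⟨N, hN⟩ := Finset.exists_nat_subset_range t
  calc ∑ k ∈ t, P k ≤ ∑ k ∈ Finset.range N, P k :=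
        Finset.sum_le_sum_of_subset_of_nonneg hN fun k _ _ =>
          (nonneg_iff_isPositive _).mpr (h k).1.1
    _ = F 0 - F N := h.sum_range N
    _ ≤ F 0 := sub_le_self _ ((nonneg_iff_isPositive _).mpr (h.isPositive h0 N))

lemma isPositive_sub (h : IsMuOrbitWith G F P) (n : ℕ) : (F 0 - F n).IsPositive := by
  rw [← nonneg_iff_isPositive, ← h.sum_range]
  exact h.sum_nonneg _

lemma reApplyInnerSelf_sub_le_zero (h : IsMuOrbitWith G F P) (h0 : (F 0).IsPositive) (n : ℕ)
    (x : H) : (F 0 - F n).reApplyInnerSelf x ≤ (F 0).reApplyInnerSelf x := by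
  rw [← h.sum_range]
  exact reApplyInnerSelf_le_of_le (h.sum_le h0 _) x

lemma summable_reApplyInnerSelf (h : IsMuOrbitWith G F P) (h0 : (F 0).IsPositive) (x : H) :
    Summable fun k => (P k).reApplyInnerSelf x :=
  summable_of_sum_range_le (fun k => (h k).1.1.2 x) fun n => by
    simpa only [← reApplyInnerSelf_sum, h.sum_range] using h.reApplyInnerSelf_sub_le_zero h0 n x

lemma reApplyInnerSelf_sub_le_tsum (h : IsMuOrbitWith G F P) (h0 : (F 0).IsPositive) (n : ℕ)
    (x : H) : (F 0 - F n).reApplyInnerSelf x ≤ ∑' k, (P k).reApplyInnerSelf x := by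
  rw [← h.sum_range, reApplyInnerSelf_sum]
  exact (h.summable_reApplyInnerSelf h0 x).sum_le_tsum _ fun k _ => (h k).1.1.2 x

lemma reApplyInnerSelf_sub_le_ando (h : IsMuOrbitWith G F P) (hG : G.IsPositive)
    (h0 : (F 0).IsPositive) {A : H →L[ℂ] H} (hA : IsAndoPart G (F 0) A) (n : ℕ) (x : H) :
    (F 0 - F n).reApplyInnerSelf x ≤ A.reApplyInnerSelf x :=
  hA.reApplyInnerSelf_le hG (h.isPositive_sub n) (h.reApplyInnerSelf_sub_le_zero h0 n)
    (h.reApplyInnerSelf_sub_le n) x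

lemma reApplyInnerSelf_parallelSum_le_tsum (h : IsMuOrbitWith G F P) (hG : G.IsPositive)
    (h0 : (F 0).IsPositive) {c : ℕ} {Q : H →L[ℂ] H} (hQ : IsParallelSum ((c : ℂ) • G) (F 0) Q)
    (x : H) : Q.reApplyInnerSelf x ≤ ∑' k, (P k).reApplyInnerSelf x := by
  set σ := ∑' k, (P k).reApplyInnerSelf x
  have hσ : 0 ≤ σ := tsum_nonneg fun k => (h k).1.1.2 x
  have key : ∀ t > 0, Q.reApplyInnerSelf x ≤ (1 + t) * σ + t := by
    intro t ht
    obtain ⟨m, hm, hm1⟩ := (((h.summable_reApplyInnerSelf h0 x).frequently_natCast_mul_lt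
      (ε := t / (c + 2 + t⁻¹)) (by positivity)).and_eventually (eventually_ge_atTop 1)).exists
    have hm1' : (1 : ℝ) ≤ m := by exact_mod_cast hm1
    have hPm := (h m).1.1.2 x
    have hQm := hQ.reApplyInnerSelf_le_of_parallelSum_sub (h m).1 hG (h.isPositive h0 m)
      (h.isPositive_sub m) (h.reApplyInnerSelf_sub_le m) m.cast_nonneg ht x
    have hsmall : (c + 1 + (1 + t⁻¹) * m) * (P m).reApplyInnerSelf x ≤ t := by
      rw [lt_div_iff₀ (by positivity)] at hm
      nlinarith [mul_le_mul_of_nonneg_right hm1' hPm]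
    nlinarith [h.reApplyInnerSelf_sub_le_tsum h0 m x]
  refine le_of_forall_pos_le_add fun ε hε => ?_
  have ht : 0 < ε / (σ + 1) := by positivity
  calc Q.reApplyInnerSelf x ≤ (1 + ε / (σ + 1)) * σ + ε / (σ + 1) := key _ ht
    _ = σ + ε := by field_simp; ring

lemma tendsto_reApplyInnerSelf_sub (h : IsMuOrbitWith G F P) (hG : G.IsPositive)
    (h0 : (F 0).IsPositive) {A : H →L[ℂ] H} (hA : IsAndoPart G (F 0) A) (x : H) :
    Tendsto (fun n => (F 0 - F n).reApplyInnerSelf x) atTop (𝓝 (A.reApplyInnerSelf x)) := by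
  have hlim : Tendsto (fun n => (F 0 - F n).reApplyInnerSelf x) atTop
      (𝓝 (∑' k, (P k).reApplyInnerSelf x)) := by
    simpa only [← reApplyInnerSelf_sum, h.sum_range] using
      (h.summable_reApplyInnerSelf h0 x).hasSum.tendsto_sum_nat
  convert hlim using 2
  obtain ⟨Q, hQ, hQA⟩ := id hA
  refine le_antisymm ?_ (le_of_tendsto' hlim (h.reApplyInnerSelf_sub_le_ando hG h0 hA · x))
  exact le_of_tendsto' (tendsto_reApplyInnerSelf (hQA x))
    fun c => h.reApplyInnerSelf_parallelSum_le_tsum hG h0 (hQ c) x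

lemma tendsto_sub_apply (h : IsMuOrbitWith G F P) (hG : G.IsPositive) (h0 : (F 0).IsPositive)
    {A : H →L[ℂ] H} (hA : IsAndoPart G (F 0) A) (x : H) :
    Tendsto (fun n => (F 0 - F n) x) atTop (𝓝 (A x)) := by
  obtain ⟨Q, hQ, hQA⟩ := id hA
  have hApos : A.IsPositive := isPositive_of_tendsto (fun n => (hQ n).1) hQA
  have hle : ∀ n, F 0 - F n ≤ A := fun n =>
    le_of_reApplyInnerSelf_le (h.isPositive_sub n).1 hApos.1
      (h.reApplyInnerSelf_sub_le_ando hG h0 hA n)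
  have hbound : ∀ n, ‖A x - (F 0 - F n) x‖ ^ 2
      ≤ ‖A‖ * (A.reApplyInnerSelf x - (F 0 - F n).reApplyInnerSelf x) := fun n => by
    simpa only [reApplyInnerSelf_sub, sub_apply] using
      norm_apply_sq_le_of_nonneg_of_le (sub_nonneg.mpr (hle n))
        (sub_le_self A ((nonneg_iff_isPositive _).mpr (h.isPositive_sub n))) x
  have hlim : Tendsto (fun n => √(‖A‖ * (A.reApplyInnerSelf x - (F 0 - F n).reApplyInnerSelf x)))
      atTop (𝓝 0) := by
    simpa using (((h.tendsto_reApplyInnerSelf_sub hG h0 hA x).const_sub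
      (A.reApplyInnerSelf x)).const_mul ‖A‖).sqrt
  rw [tendsto_iff_norm_sub_tendsto_zero]
  refine squeeze_zero (fun n => norm_nonneg _) (fun n => ?_) hlim
  rw [norm_sub_rev]
  exact (le_abs_self _).trans (Real.abs_le_sqrt (hbound n))

lemma summable_apply (h : IsMuOrbitWith G F P) (h0 : (F 0).IsPositive) (x : H) :
    Summable fun n => P n x := by
  rw [summable_iff_vanishing_norm]
  intro ε hε
  obtain ⟨s, hs⟩ := summable_iff_vanishing_norm.mp (h.summable_reApplyInnerSelf h0 x)
    (ε ^ 2 / (‖F 0‖ + 1)) (by positivity)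
  refine ⟨s, fun t ht => lt_of_pow_lt_pow_left₀ 2 hε.le ?_⟩
  have hsum : 0 ≤ ∑ k ∈ t, (P k).reApplyInnerSelf x := Finset.sum_nonneg fun k _ => (h k).1.1.2 x
  have hsmall := hs t ht
  rw [Real.norm_of_nonneg hsum, lt_div_iff₀ (by positivity)] at hsmall
  calc ‖∑ k ∈ t, P k x‖ ^ 2 ≤ ‖F 0‖ * ∑ k ∈ t, (P k).reApplyInnerSelf x := by
        simpa only [reApplyInnerSelf_sum, sum_apply] using
          norm_apply_sq_le_of_nonneg_of_le (h.sum_nonneg t) (h.sum_le h0 t) x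
    _ ≤ (‖F 0‖ + 1) * ∑ k ∈ t, (P k).reApplyInnerSelf x := by gcongr; linarith
    _ < ε ^ 2 := by linarith

end IsMuOrbitWith

/-- Theorem 4 (1) of the paper. `τ_G(X) = X - [G]X`, and the series
`Σₙ (μ_G^{[n]}(X)) : G` converges strongly with sum `[G]X`. -/
theorem stmt16 (G X L A : H →L[ℂ] H)
    (hG : G.IsPositive) (hX : X.IsPositive)
    (hL : IsTau G X L) (hA : IsAndoPart G X A) :
    L = X - A ∧
    ∀ F P : ℕ → H →L[ℂ] H, F 0 = X →
      (∀ n : ℕ, IsParallelSum (F n) G (P n) ∧ F (n + 1) = F n - P n) →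
      ∀ x : H, HasSum (fun n => P n x) (A x) := by
  have key : ∀ F P, F 0 = X → IsMuOrbitWith G F P →
      ∀ x, Tendsto (fun n => (F 0 - F n) x) atTop (𝓝 (A x)) := by
    rintro F P rfl hFP
    exact hFP.tendsto_sub_apply hG hX hA
  refine ⟨?_, fun F P hF0 hFP x => ?_⟩
  · obtain ⟨F, hF0, hF, hFL⟩ := hL
    choose P hFP using hF
    ext x
    refine tendsto_nhds_unique (hFL x) ?_
    simpa [hF0] using (key F P hF0 hFP x).const_sub (X x)
  · rw [(IsMuOrbitWith.summable_apply hFP (hF0 ▸ hX) x).hasSum_iff_tendsto_nat]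
    simpa only [← sum_apply, IsMuOrbitWith.sum_range hFP] using key F P hF0 hFP x
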